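/- arXiv:1605.09598 — 9 statements merged into one kernel-verified Lean document; each statement's English description precedes it below -/
import Mathlib

section
/- Let K be a field and let L be a field extension of K with a K-basis b : Basis (Fin ρ₁) K L. For β ∈ L let M β := Algebra.leftMulMatrix b β. Let H₁ : Matrix (Fin ρ₁) (Fin n₁) K and H₂ : Matrix (Fin ρ₂) (Fin n₂) L, and let T : Matrix ((Fin ρ₂) × (Fin ρ₁)) ((Fin n₂) × (Fin n₁)) K be the expanded tensor-product parity check matrix, T (i,r) (j,c) = (M (H₂ i j) * H₁) r c. If H₁ * H₁ᵀ = 0 (i.e., the component code C₁ is Euclidean dual-containing), then T * Tᵀ = 0 (i.e., the tensor product code C₂ ⊗_H C₁ is Euclidean dual-containing). -/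
open Matrix

/-! Every block of `T` has the form `M β * H₁`, so every block of `T * Tᵀ` is a sum of terms
`M β * (H₁ * H₁ᵀ) * (M β')ᵀ`, each of which vanishes. -/

section

variable {R ι κ m n p : Type*} [CommSemiring R] [Fintype κ] [Fintype n]

theorem Matrix.mul_transpose_apply_of_blocks (T : Matrix (ι × m) (κ × n) R)
    (B : ι → κ → Matrix m n R) (hT : ∀ i r j c, T (i, r) (j, c) = B i j r c)
    (i : ι) (r : m) (i' : ι) (r' : m) :
    (T * Tᵀ) (i, r) (i', r') = ∑ j, (B i j * (B i' j)ᵀ) r r' := by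
  simp only [mul_apply, transpose_apply, Fintype.sum_prod_type, hT]

theorem Matrix.mul_mul_transpose_mul_eq_zero [Fintype p] (A A' : Matrix m p R)
    {H : Matrix p n R} (hH : H * Hᵀ = 0) : A * H * (A' * H)ᵀ = 0 := by
  rw [transpose_mul, Matrix.mul_assoc, ← Matrix.mul_assoc H, hH, Matrix.zero_mul,
    Matrix.mul_zero]

end

/-- Lemma 7(i) of the paper: if the binary/quaternary component code `C₁` with parity check
matrix `H₁` is Euclidean dual-containing (`H₁ * H₁ᵀ = 0`), then the expanded tensor-product
parity check matrix `T` of `C₂ ⊗_H C₁` satisfies `T * Tᵀ = 0`. -/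
theorem stmt0 {K L : Type*} [Field K] [Field L] [Algebra K L]
    {ρ₁ n₁ ρ₂ n₂ : ℕ} (b : Module.Basis (Fin ρ₁) K L)
    (H₁ : Matrix (Fin ρ₁) (Fin n₁) K) (H₂ : Matrix (Fin ρ₂) (Fin n₂) L)
    (T : Matrix (Fin ρ₂ × Fin ρ₁) (Fin n₂ × Fin n₁) K)
    (hT : ∀ i r j c, T (i, r) (j, c) = (Algebra.leftMulMatrix b (H₂ i j) * H₁) r c)
    (h1 : H₁ * H₁ᵀ = 0) :
    T * Tᵀ = 0 := by
  ext ⟨i, r⟩ ⟨i', r'⟩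
  rw [mul_transpose_apply_of_blocks T _ hT]
  refine Finset.sum_eq_zero fun j _ => ?_
  rw [mul_mul_transpose_mul_eq_zero _ _ h1, Matrix.zero_apply]
end

section
/- Let K be a field and let L be a field extension of K with a K-basis b : Basis (Fin ρ₁) K L. For β ∈ L let M β := Algebra.leftMulMatrix b β. Let H₂ : Matrix (Fin ρ₂) (Fin n₂) L and let ψH₂ : Matrix ((Fin ρ₂) × (Fin ρ₁)) (Fin n₂) K be its coordinate expansion, ψH₂ (i,r) j = b.repr (H₂ i j) r. Assume ψH₂ * ψH₂ᵀ = 0 (i.e., the subfield expansion ψ(C₂) is Euclidean dual-containing). Then for EVERY matrix H₁ : Matrix (Fin ρ₁) (Fin n₁) K (no dual-containing condition on C₁), the expanded tensor-product parity check matrix T, defined by T (i,r) (j,c) = (M (H₂ i j) * H₁) r c, satisfies T * Tᵀ = 0. -/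
/-!
Expanding `β = ∑ₜ βₜ bₜ` in the basis gives `M β = ∑ₜ βₜ M(bₜ)`, so `T` is the sum over `t` of
the "Kronecker products" of the `t`-th row-slices of `ψH₂` with `Aₜ = M(bₜ) H₁`. Hence every
entry of `T Tᵀ` is a combination `∑ₜ ∑ₜ' (ψH₂ ψH₂ᵀ)((i,t),(i',t')) (Aₜ Aₜ'ᵀ)(r,r')`, which
vanishes as soon as `ψH₂ ψH₂ᵀ = 0`, whatever `H₁` is.
-/

open Matrix

section Expansion

variable {R ι τ κ ρ ν : Type*} [CommSemiring R] [Fintype τ] [Fintype κ] [Fintype ν]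
  (P : Matrix (ι × τ) κ R) (A : τ → Matrix ρ ν R) (T : Matrix (ι × ρ) (κ × ν) R)

theorem Matrix.mul_transpose_apply_of_expansion
    (hT : ∀ i r j c, T (i, r) (j, c) = ∑ t, P (i, t) j * A t r c) (i i' : ι) (r r' : ρ) :
    (T * Tᵀ) (i, r) (i', r') = ∑ t, ∑ t', (P * Pᵀ) (i, t) (i', t') * (A t * (A t')ᵀ) r r' := by
  simp only [mul_apply, transpose_apply, Fintype.sum_prod_type, hT, Finset.sum_mul_sum]
  simp_rw [Finset.sum_comm (γ := ν), Finset.sum_comm (γ := κ), mul_mul_mul_comm]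

theorem Matrix.mul_transpose_eq_zero_of_expansion
    (hT : ∀ i r j c, T (i, r) (j, c) = ∑ t, P (i, t) j * A t r c) (hP : P * Pᵀ = 0) :
    T * Tᵀ = 0 := by
  ext ⟨i, r⟩ ⟨i', r'⟩
  simp [mul_transpose_apply_of_expansion P A T hT, hP]

end Expansion

theorem Algebra.leftMulMatrix_mul_apply_eq_sum_repr {K L : Type*} [CommSemiring K] [Semiring L]
    [Algebra K L] {m n : Type*} [Fintype m] [DecidableEq m] (b : Module.Basis m K L)
    (x : L) (H : Matrix m n K) (r : m) (c : n) :
    (leftMulMatrix b x * H) r c = ∑ t, b.repr x t * (leftMulMatrix b (b t) * H) r c := by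
  conv_lhs => rw [← b.sum_repr x]
  simp only [map_sum, map_smul, Matrix.sum_mul, Matrix.smul_mul, Matrix.sum_apply,
    Matrix.smul_apply, smul_eq_mul]

/-- Lemma 7(ii) of the paper: if the subfield expansion `ψ(C₂)` of the component code `C₂`
over the extension field is Euclidean dual-containing (`ψH₂ * ψH₂ᵀ = 0`), then for every
matrix `H₁` the expanded tensor-product parity check matrix `T` satisfies `T * Tᵀ = 0`. -/
theorem stmt1 {K L : Type*} [Field K] [Field L] [Algebra K L]
    {ρ₁ n₁ ρ₂ n₂ : ℕ} (b : Module.Basis (Fin ρ₁) K L)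
    (H₂ : Matrix (Fin ρ₂) (Fin n₂) L)
    (ψH₂ : Matrix (Fin ρ₂ × Fin ρ₁) (Fin n₂) K)
    (hψ : ∀ i r j, ψH₂ (i, r) j = b.repr (H₂ i j) r)
    (h2 : ψH₂ * ψH₂ᵀ = 0) :
    ∀ (H₁ : Matrix (Fin ρ₁) (Fin n₁) K)
      (T : Matrix (Fin ρ₂ × Fin ρ₁) (Fin n₂ × Fin n₁) K),
      (∀ i r j c, T (i, r) (j, c) = (Algebra.leftMulMatrix b (H₂ i j) * H₁) r c) →
      T * Tᵀ = 0 := by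
  intro H₁ T hT
  refine mul_transpose_eq_zero_of_expansion ψH₂
    (fun t => Algebra.leftMulMatrix b (b t) * H₁) T (fun i r j c => ?_) h2
  rw [hT, Algebra.leftMulMatrix_mul_apply_eq_sum_repr]
  simp only [hψ]
end

section
/- Let K := GaloisField 2 2 be the field with four elements and conj : K → K, conj x = x², its Frobenius automorphism. Let L be a field extension of K with a K-basis b : Basis (Fin ρ₁) K L, and for β ∈ L let M β := Algebra.leftMulMatrix b β. Let H₁ : Matrix (Fin ρ₁) (Fin n₁) K satisfy H₁ * (H₁.map conj)ᵀ = 0 (i.e., the quaternary component code C₁ is Hermitian dual-containing), and let H₂ : Matrix (Fin ρ₂) (Fin n₂) L be arbitrary. Then the expanded tensor-product parity check matrix T, defined by T (i,r) (j,c) = (M (H₂ i j) * H₁) r c, satisfies T * (T.map conj)ᵀ = 0 (i.e., the tensor product code is Hermitian dual-containing). -/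
open Matrix

section HermitianOrthogonality

variable {R : Type*} [CommSemiring R] (φ : R →+* R)
  {l l' m n : Type*} [Fintype m] [Fintype n]

theorem Matrix.mul_mul_map_transpose_mul_eq_zero {H : Matrix m n R}
    (hH : H * (H.map φ)ᵀ = 0) (A : Matrix l m R) (A' : Matrix l' m R) :
    A * H * ((A' * H).map φ)ᵀ = 0 := by
  rw [Matrix.map_mul, transpose_mul, ← Matrix.mul_assoc, Matrix.mul_assoc A, hH,
    Matrix.mul_zero, Matrix.zero_mul]

theorem Matrix.mul_map_transpose_eq_zero_of_blocks_eq_mul {ι κ : Type*} [Fintype κ]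
    {H : Matrix m n R} (hH : H * (H.map φ)ᵀ = 0) (A : ι → κ → Matrix l m R)
    (T : Matrix (ι × l) (κ × n) R) (hT : ∀ i r j c, T (i, r) (j, c) = (A i j * H) r c) :
    T * (T.map φ)ᵀ = 0 := by
  ext ⟨i, r⟩ ⟨i', r'⟩
  have hblock : (T * (T.map φ)ᵀ) (i, r) (i', r')
      = ∑ j, (A i j * H * ((A i' j * H).map φ)ᵀ) r r' := by
    simp only [mul_apply, transpose_apply, map_apply, Fintype.sum_prod_type, hT]
  simp only [hblock, mul_mul_map_transpose_mul_eq_zero φ hH, zero_apply,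
    Finset.sum_const_zero]

end HermitianOrthogonality

/-- Hermitian version of Lemma 7(i): if the quaternary component code `C₁` with parity check
matrix `H₁` is Hermitian dual-containing (`H₁ * (H₁.map conj)ᵀ = 0` with `conj x = x²`), then
the expanded tensor-product parity check matrix `T` satisfies `T * (T.map conj)ᵀ = 0`. -/
theorem stmt2 {L : Type*} [Field L] [Algebra (GaloisField 2 2) L]
    {ρ₁ n₁ ρ₂ n₂ : ℕ} (b : Module.Basis (Fin ρ₁) (GaloisField 2 2) L)
    (conj : GaloisField 2 2 → GaloisField 2 2) (hconj : ∀ x, conj x = x ^ 2)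
    (H₁ : Matrix (Fin ρ₁) (Fin n₁) (GaloisField 2 2))
    (h1 : H₁ * (H₁.map conj)ᵀ = 0)
    (H₂ : Matrix (Fin ρ₂) (Fin n₂) L)
    (T : Matrix (Fin ρ₂ × Fin ρ₁) (Fin n₂ × Fin n₁) (GaloisField 2 2))
    (hT : ∀ i r j c, T (i, r) (j, c) = (Algebra.leftMulMatrix b (H₂ i j) * H₁) r c) :
    T * (T.map conj)ᵀ = 0 := by
  obtain rfl : conj = frobenius (GaloisField 2 2) 2 := funext fun x => by
    rw [hconj, frobenius_def]
  exact mul_map_transpose_eq_zero_of_blocks_eq_mul _ h1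
    (fun i j => Algebra.leftMulMatrix b (H₂ i j)) T hT
end

section
/- Let K := GaloisField 2 2 be the field with four elements and conj : K → K, conj x = x², its Frobenius automorphism. Let L be a field extension of K with a K-basis b : Basis (Fin ρ₁) K L, and for β ∈ L let M β := Algebra.leftMulMatrix b β. Let H₂ : Matrix (Fin ρ₂) (Fin n₂) L and let ψH₂ be its coordinate expansion, ψH₂ (i,r) j = b.repr (H₂ i j) r. Assume ψH₂ * ((ψH₂).map conj)ᵀ = 0 (i.e., the subfield expansion ψ(C₂) is Hermitian dual-containing). Then for EVERY matrix H₁ : Matrix (Fin ρ₁) (Fin n₁) K, the expanded tensor-product parity check matrix T, defined by T (i,r) (j,c) = (M (H₂ i j) * H₁) r c, satisfies T * (T.map conj)ᵀ = 0. -/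
/-!
Left multiplication `β ↦ M β` is `K`-linear, so every block `M (H₂ i j) * H₁` of `T` is the
combination `∑ t, ψH₂ (i, t) j • (M (b t) * H₁)` of fixed matrices with coefficients from a row
of `ψH₂`. Since `conj` is a ring endomorphism, each entry of `T * (T.map conj)ᵀ` is then a
combination of entries of `ψH₂ * (ψH₂.map conj)ᵀ = 0`.
-/

open Matrix

theorem expansion_mul_map_transpose_apply {R : Type*} [CommSemiring R] (σ : R →+* R)
    {ι κ n m p : Type*} [Fintype κ] [Fintype n] [Fintype p]
    (ψ : Matrix (ι × κ) n R) (A : κ → Matrix m p R) (T : Matrix (ι × m) (n × p) R)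
    (hT : ∀ i r j c, T (i, r) (j, c) = ∑ t, ψ (i, t) j * A t r c) (i i' : ι) (r r' : m) :
    (T * (T.map σ)ᵀ) (i, r) (i', r') =
      ∑ t, ∑ t', (ψ * (ψ.map σ)ᵀ) (i, t) (i', t') * (A t * ((A t').map σ)ᵀ) r r' := by
  simp only [mul_apply, transpose_apply, map_apply, Fintype.sum_prod_type, hT, map_sum,
    map_mul, Finset.sum_mul_sum]
  conv_lhs => enter [2, j]; rw [Finset.sum_comm]
  conv_lhs => enter [2, j, 2, t]; rw [Finset.sum_comm]
  rw [Finset.sum_comm]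
  conv_lhs => enter [2, t]; rw [Finset.sum_comm]
  simp only [mul_mul_mul_comm]

theorem expansion_mul_map_transpose_eq_zero {R : Type*} [CommSemiring R] (σ : R →+* R)
    {ι κ n m p : Type*} [Fintype κ] [Fintype n] [Fintype p]
    (ψ : Matrix (ι × κ) n R) (A : κ → Matrix m p R) (T : Matrix (ι × m) (n × p) R)
    (hT : ∀ i r j c, T (i, r) (j, c) = ∑ t, ψ (i, t) j * A t r c)
    (hψ : ψ * (ψ.map σ)ᵀ = 0) :
    T * (T.map σ)ᵀ = 0 := by
  ext ⟨i, r⟩ ⟨i', r'⟩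
  simp [expansion_mul_map_transpose_apply σ ψ A T hT, hψ]

theorem leftMulMatrix_mul_eq_sum {K L : Type*} [CommRing K] [Ring L] [Algebra K L]
    {ι n : Type*} [Fintype ι] [DecidableEq ι] (b : Module.Basis ι K L) (H : Matrix ι n K)
    (β : L) :
    Algebra.leftMulMatrix b β * H = ∑ t, b.repr β t • (Algebra.leftMulMatrix b (b t) * H) := by
  conv_lhs => rw [← b.sum_repr β]
  simp only [map_sum, map_smul, Matrix.sum_mul, smul_mul]

/-- Hermitian version of Lemma 7(ii): if the subfield expansion `ψ(C₂)` is Hermitian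
dual-containing, then for every matrix `H₁` the expanded tensor-product parity check
matrix `T` satisfies `T * (T.map conj)ᵀ = 0`. -/
theorem stmt3 {L : Type*} [Field L] [Algebra (GaloisField 2 2) L]
    {ρ₁ n₁ ρ₂ n₂ : ℕ} (b : Module.Basis (Fin ρ₁) (GaloisField 2 2) L)
    (conj : GaloisField 2 2 → GaloisField 2 2) (hconj : ∀ x, conj x = x ^ 2)
    (H₂ : Matrix (Fin ρ₂) (Fin n₂) L)
    (ψH₂ : Matrix (Fin ρ₂ × Fin ρ₁) (Fin n₂) (GaloisField 2 2))
    (hψ : ∀ i r j, ψH₂ (i, r) j = b.repr (H₂ i j) r)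
    (h2 : ψH₂ * ((ψH₂).map conj)ᵀ = 0) :
    ∀ (H₁ : Matrix (Fin ρ₁) (Fin n₁) (GaloisField 2 2))
      (T : Matrix (Fin ρ₂ × Fin ρ₁) (Fin n₂ × Fin n₁) (GaloisField 2 2)),
      (∀ i r j c, T (i, r) (j, c) = (Algebra.leftMulMatrix b (H₂ i j) * H₁) r c) →
      T * (T.map conj)ᵀ = 0 := by
  intro H₁ T hT
  have hblock : ∀ i r j c,
      T (i, r) (j, c) = ∑ t, ψH₂ (i, t) j * (Algebra.leftMulMatrix b (b t) * H₁) r c := by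
    intro i r j c
    rw [hT, leftMulMatrix_mul_eq_sum b H₁, Matrix.sum_apply]
    simp only [Matrix.smul_apply, smul_eq_mul, hψ]
  have hfrob : conj = frobenius (GaloisField 2 2) 2 := funext hconj
  subst hfrob
  exact expansion_mul_map_transpose_eq_zero _ ψH₂ _ T hblock h2
end

section
/- Let K be a field and let L be a field extension of K with a K-basis b : Basis (Fin ρ₁) K L; for β ∈ L let M β := Algebra.leftMulMatrix b β (the companion-matrix representation). Let H₁ : Matrix (Fin ρ₁) (Fin n₁) K and suppose there is a matrix Lmat : Matrix (Fin ρ₁) (Fin ρ₁) K with Lmat * (H₁ * H₁ᵀ) = 1 (i.e., H₁ * H₁ᵀ is invertible). Let H₂ : Matrix (Fin ρ₂) (Fin n₂) L satisfy H₂ * H₂ᵀ = 0 (i.e., the component code C₂ over the extension field is dual-containing). Define A, B : Matrix ((Fin ρ₂) × (Fin ρ₁)) ((Fin n₂) × (Fin n₁)) K by A (i,r) (j,c) = (M (H₂ i j) * Lmat * H₁) r c and B (i,r) (j,c) = ((M (H₂ i j))ᵀ * H₁) r c. Then A * Bᵀ = 0 (so the tensor product code with parity check matrix B contains the code dual to the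 code with parity check matrix A). -/
/-!
Block `(i, i')` of `A * Bᵀ` is `∑ j, [H₂ i j] * Lmat * H₁ * H₁ᵀ * [H₂ i' j]`. The factor
`Lmat * (H₁ * H₁ᵀ) = 1` cancels, and since `β ↦ [β]` is a ring homomorphism the sum is
`[(H₂ * H₂ᵀ) i i'] = [0] = 0`.
-/

open Matrix

namespace Matrix

variable {m m' n p p' q R : Type*} [Fintype n] [Fintype q] [CommSemiring R]

theorem comp_mul_transpose_comp_apply (F : Matrix m n (Matrix p q R))
    (G : Matrix m' n (Matrix p' q R)) (i : m) (r : p) (i' : m') (r' : p') :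
    (comp m n p q R F * (comp m' n p' q R G)ᵀ) (i, r) (i', r') =
      (∑ j, F i j * (G i' j)ᵀ) r r' := by
  simp only [mul_apply, sum_apply, Fintype.sum_prod_type, transpose_apply, comp_apply]

theorem mul_mul_mul_transpose_mul_transpose_of_mul_gram_eq_one
    {k : Type*} [Fintype k] [DecidableEq k] {H : Matrix k q R} {Linv : Matrix k k R}
    (hL : Linv * (H * Hᵀ) = 1)
    (P Q : Matrix k k R) : P * Linv * H * (Qᵀ * H)ᵀ = P * Q := by
  rw [transpose_mul, transpose_transpose, Matrix.mul_assoc, Matrix.mul_assoc,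
    ← Matrix.mul_assoc H, ← Matrix.mul_assoc Linv, hL, Matrix.one_mul]

end Matrix

/-- Theorem 9 of the paper (key matrix identity): if `H₁ * H₁ᵀ` is invertible with inverse
`Lmat` and the component code `C₂` over the extension field is dual-containing
(`H₂ * H₂ᵀ = 0`), then the modified expanded parity check matrix `A` (blocks
`[H₂ i j] · Lmat · H₁`) and the expanded parity check matrix `B` (blocks `[H₂ i j]ᵀ · H₁`)
satisfy `A * Bᵀ = 0`. -/
theorem stmt4 {K L : Type*} [Field K] [Field L] [Algebra K L]
    {ρ₁ n₁ ρ₂ n₂ : ℕ} (b : Module.Basis (Fin ρ₁) K L)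
    (H₁ : Matrix (Fin ρ₁) (Fin n₁) K)
    (Lmat : Matrix (Fin ρ₁) (Fin ρ₁) K)
    (hL : Lmat * (H₁ * H₁ᵀ) = 1)
    (H₂ : Matrix (Fin ρ₂) (Fin n₂) L)
    (h2 : H₂ * H₂ᵀ = 0)
    (A B : Matrix (Fin ρ₂ × Fin ρ₁) (Fin n₂ × Fin n₁) K)
    (hA : ∀ i r j c, A (i, r) (j, c) = (Algebra.leftMulMatrix b (H₂ i j) * Lmat * H₁) r c)
    (hB : ∀ i r j c, B (i, r) (j, c) = ((Algebra.leftMulMatrix b (H₂ i j))ᵀ * H₁) r c) :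
    A * Bᵀ = 0 := by
  set M := Algebra.leftMulMatrix b
  have hA' : A = comp _ _ _ _ K (of fun i j => M (H₂ i j) * Lmat * H₁) := by
    ext ⟨i, r⟩ ⟨j, c⟩; exact hA i r j c
  have hB' : B = comp _ _ _ _ K (of fun i j => (M (H₂ i j))ᵀ * H₁) := by
    ext ⟨i, r⟩ ⟨j, c⟩; exact hB i r j c
  ext ⟨i, r⟩ ⟨i', r'⟩
  rw [hA', hB', comp_mul_transpose_comp_apply]
  simp only [of_apply, mul_mul_mul_transpose_mul_transpose_of_mul_gram_eq_one hL,
    ← map_mul, ← map_sum]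
  have hrow : ∑ j, H₂ i j * H₂ i' j = 0 := by
    simpa only [mul_apply, transpose_apply, Matrix.zero_apply] using congrFun (congrFun h2 i) i'
  rw [hrow, map_zero]
  rfl
end

section
/- For every natural number t ≥ 1, the sum ∑_{d ∣ t, d odd} μ(d) · 2^{t/d} is strictly positive, where μ is the Möbius function and the sum ranges over the odd divisors d of t. (Consequently, N₂(2t) = (1/(2t)) ∑_{d ∣ t, d odd} μ(d) 2^{t/d}, the number of self-reciprocal irreducible polynomials of degree 2t over GF(2), is positive, so a self-reciprocal irreducible polynomial of every even degree exists.) -/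
/-!
Isolate the term `d = 1`, which is `2 ^ t`. Since `|μ d| ≤ 1`, the remaining terms are bounded
in absolute value by `∑ 2 ^ (t / d)` over the divisors `d ≠ 1` of `t`; as `d ↦ t / d` maps these
bijectively onto the proper divisors of `t`, this is a sum of distinct powers `2 ^ k` with `k < t`,
hence less than `2 ^ t`.
-/

open Finset

namespace Nat

theorem sum_divisors_erase_one_div {M : Type*} [AddCancelCommMonoid M] (f : ℕ → M) {n : ℕ}
    (hn : n ≠ 0) : ∑ d ∈ n.divisors.erase 1, f (n / d) = ∑ d ∈ n.properDivisors, f d := by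
  have h := sum_div_divisors n f
  rw [← add_sum_erase _ _ (one_mem_divisors.2 hn), Nat.div_one, ← cons_self_properDivisors hn,
    sum_cons, cons_self_properDivisors hn] at h
  exact add_left_cancel h

theorem sum_divisors_erase_one_pow_div_lt {b : ℕ} (hb : 2 ≤ b) (n : ℕ) :
    ∑ d ∈ n.divisors.erase 1, b ^ (n / d) < b ^ n := by
  rcases eq_or_ne n 0 with rfl | hn
  · simp
  rw [sum_divisors_erase_one_div _ hn]
  exact geomSum_lt hb fun k hk => (mem_properDivisors.1 hk).2

theorem sum_mul_pow_div_pos {b n : ℕ} (hb : 2 ≤ b) {S : Finset ℕ} (hS : S ⊆ n.divisors)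
    (h1 : 1 ∈ S) {c : ℕ → ℤ} (hc1 : c 1 = 1) (hc : ∀ d ∈ S, |c d| ≤ 1) :
    0 < ∑ d ∈ S, c d * (b : ℤ) ^ (n / d) := by
  rw [← add_sum_erase _ _ h1, hc1, Nat.div_one, one_mul]
  have hrest : |∑ d ∈ S.erase 1, c d * (b : ℤ) ^ (n / d)| < (b : ℤ) ^ n :=
    calc |∑ d ∈ S.erase 1, c d * (b : ℤ) ^ (n / d)|
        ≤ ∑ d ∈ S.erase 1, |c d * (b : ℤ) ^ (n / d)| := abs_sum_le_sum_abs _ _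
      _ ≤ ∑ d ∈ S.erase 1, (b : ℤ) ^ (n / d) := sum_le_sum fun d hd => by
          rw [abs_mul, abs_pow, Nat.abs_cast]
          exact mul_le_of_le_one_left (by positivity) (hc d (mem_of_mem_erase hd))
      _ ≤ ∑ d ∈ n.divisors.erase 1, (b : ℤ) ^ (n / d) :=
          sum_le_sum_of_subset_of_nonneg (erase_subset_erase 1 hS) fun _ _ _ => by positivity
      _ < (b : ℤ) ^ n := by exact_mod_cast sum_divisors_erase_one_pow_div_lt hb n
  linarith [neg_abs_le (∑ d ∈ S.erase 1, c d * (b : ℤ) ^ (n / d))]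

end Nat

/-- For every `t ≥ 1`, the sum `∑_{d ∣ t, d odd} μ(d) · 2^{t/d}` is strictly positive; hence
the number `N₂(2t)` of self-reciprocal irreducible polynomials of degree `2t` over `GF(2)`
is positive. -/
theorem stmt9 (t : ℕ) (ht : 1 ≤ t) :
    0 < ∑ d ∈ t.divisors.filter (fun d => Odd d),
      (ArithmeticFunction.moebius d) * 2 ^ (t / d) := by
  have h1 : 1 ∈ t.divisors.filter (fun d => Odd d) := by
    simpa [Nat.one_mem_divisors] using Nat.one_le_iff_ne_zero.1 ht
  exact_mod_cast Nat.sum_mul_pow_div_pos (b := 2) le_rfl (filter_subset _ _) h1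
    ArithmeticFunction.moebius_apply_one fun _ _ => ArithmeticFunction.abs_moebius_le_one
end

section
/- Let n ≥ 2 and let H : Matrix (Fin (n-1)) (Fin n) (ZMod 2) be any parity check matrix of the binary repetition code of length n, i.e., H.mulVec (fun _ => 1) = 0 and the rows of H are linearly independent (H has rank n − 1). Then H * Hᵀ is invertible (IsUnit (H * Hᵀ)) if and only if n is odd. (This is the fact, used in the construction of quantum tensor product codes from repetition codes, that the repetition code of odd length is reversible and its parity check matrix satisfies the full-rank condition H H^T invertible.) -/
open Matrix

/-!
Since `Hᵀ *ᵥ v = v ᵥ* H` and `v ↦ v ᵥ* H` is injective, `H * Hᵀ` is singular exactly when the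
row space of `H` meets `ker H` nontrivially. By rank–nullity `ker H` is the line through the
all-ones vector `𝟙` and the row space is its orthogonal `{y | y ⬝ᵥ 𝟙 = 0}`, so `H * Hᵀ` is
invertible iff `𝟙 ⬝ᵥ 𝟙 = n` is nonzero in the field; over `ZMod 2` this means `n` is odd.
-/

namespace Matrix

variable {K m n : Type*} [Field K] [Fintype n]

theorem isUnit_mul_transpose_iff_disjoint [Fintype m] [DecidableEq m] {H : Matrix m n K}
    (hH : LinearIndependent K H.row) :
    IsUnit (H * Hᵀ) ↔
      Disjoint (LinearMap.range H.vecMulLinear) (LinearMap.ker H.mulVecLin) := by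
  have hvecMul : ∀ v, v ᵥ* H = 0 ↔ v = 0 := fun v =>
    (vecMul_injective_iff.mpr hH).eq_iff' (zero_vecMul H)
  have hGram : ∀ v, (H * Hᵀ) *ᵥ v = H *ᵥ (v ᵥ* H) := fun v => by
    rw [← mulVec_mulVec, mulVec_transpose]
  rw [← mulVec_injective_iff_isUnit, ← coe_mulVecLin, injective_iff_map_eq_zero,
    Submodule.disjoint_def]
  simp only [LinearMap.mem_range, vecMulLinear_apply, LinearMap.mem_ker, mulVecLin_apply,
    forall_exists_index, forall_apply_eq_imp_iff, hGram, hvecMul]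

theorem ker_mulVecLin_eq_span_singleton {H : Matrix m n K} {x : n → K}
    (hrank : H.rank + 1 = Fintype.card n) (hx : H *ᵥ x = 0) (hx0 : x ≠ 0) :
    LinearMap.ker H.mulVecLin = K ∙ x := by
  refine (Submodule.eq_of_le_of_finrank_le ?_ ?_).symm
  · rwa [Submodule.span_singleton_le_iff_mem, LinearMap.mem_ker]
  · have := LinearMap.finrank_range_add_finrank_ker H.mulVecLin
    rw [Module.finrank_fintype_fun_eq_card, ← rank, ← hrank] at this
    rw [finrank_span_singleton hx0]
    omega

theorem mem_range_vecMulLinear_iff_dotProduct_eq_zero [Fintype m] {H : Matrix m n K}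
    {x : n → K} (hrank : H.rank + 1 = Fintype.card n) (hx : H *ᵥ x = 0) (hx0 : x ≠ 0)
    (y : n → K) :
    y ∈ LinearMap.range H.vecMulLinear ↔ y ⬝ᵥ x = 0 := by
  let φ : Module.Dual K (n → K) := (dotProductBilin K K).flip x
  have hφ : φ ≠ 0 := by
    obtain ⟨i, hi⟩ := Function.ne_iff.mp hx0
    classical
    exact fun h => hi (by simpa [φ] using LinearMap.congr_fun h (Pi.single i 1))
  have hle : LinearMap.range H.vecMulLinear ≤ LinearMap.ker φ := by
    rintro _ ⟨v, rfl⟩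
    simp [φ, ← dotProduct_mulVec, hx]
  have heq := Submodule.eq_of_le_of_finrank_le hle (by
    rw [range_vecMulLinear, ← rank_eq_finrank_span_row]
    have := Module.Dual.finrank_ker_add_one_of_ne_zero hφ
    rw [Module.finrank_fintype_fun_eq_card] at this
    omega)
  rw [heq]
  simp [φ]

theorem isUnit_mul_transpose_iff_card_ne_zero [Fintype m] [DecidableEq m] {H : Matrix m n K}
    (hcard : Fintype.card m + 1 = Fintype.card n) (hH : LinearIndependent K H.row)
    (h1 : H *ᵥ 1 = 0) :
    IsUnit (H * Hᵀ) ↔ (Fintype.card n : K) ≠ 0 := by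
  have hrank : H.rank + 1 = Fintype.card n := by rw [hH.rank_matrix, hcard]
  have : Nonempty n := Fintype.card_pos_iff.mp (by omega)
  have h1ne : (1 : n → K) ≠ 0 := one_ne_zero
  rw [isUnit_mul_transpose_iff_disjoint hH, ker_mulVecLin_eq_span_singleton hrank h1 h1ne,
    Submodule.disjoint_span_singleton' h1ne,
    mem_range_vecMulLinear_iff_dotProduct_eq_zero hrank h1 h1ne, one_dotProduct_one]

end Matrix

/-- For any full-row-rank parity check matrix `H` of the binary repetition code of length
`n ≥ 2`, the Gram matrix `H * Hᵀ` is invertible if and only if `n` is odd. -/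
theorem stmt10 (n : ℕ) (hn : 2 ≤ n) (H : Matrix (Fin (n - 1)) (Fin n) (ZMod 2))
    (hker : H.mulVec (fun _ => 1) = 0)
    (hrows : LinearIndependent (ZMod 2) (fun i => H i)) :
    IsUnit (H * Hᵀ) ↔ Odd n := by
  have hcard : Fintype.card (Fin (n - 1)) + 1 = Fintype.card (Fin n) := by
    simp only [Fintype.card_fin]; omega
  rw [isUnit_mul_transpose_iff_card_ne_zero hcard hrows hker, Fintype.card_fin,
    ZMod.natCast_ne_zero_iff_odd]
end

section
/- Let K := GaloisField 2 2 be the field with four elements and conj : K → K, conj x = x², its Frobenius automorphism. Let H : Matrix (Fin ρ) (Fin n) K and let D := {x : Fin n → K | H.mulVec x = 0} be the corresponding quaternary linear code. Let D^{⊥h} := {v : Fin n → K | ∀ u ∈ D, ∑ i, u i * (v i)^2 = 0} be the Hermitian dual of D. Then D^{⊥h} ≤ D if and only if H * (H.map conj)ᵀ = 0 (i.e., H H† = 0, where H† denotes the conjugate transpose). -/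
/-!
Write `σ` for the involution `x ↦ x²` of `GF(4)`. Since `(u, v)_h = (σ ∘ v) ⬝ᵥ u`, a vector `v`
lies in the Hermitian dual of `ker H` iff `σ ∘ v` annihilates `ker H`, i.e. iff `σ ∘ v` is a
combination `c ᵥ* H` of the rows of `H`; applying `σ` again, the Hermitian dual is the column
space of `H† = (H.map σ)ᵀ`. That column space lies in `ker H` exactly when `H * H† = 0`.
-/

open Matrix

theorem Matrix.range_mulVec_subset_ker_iff {R l m n : Type*} [Semiring R] [Fintype l] [Fintype n]
    (H : Matrix m n R) (A : Matrix n l R) :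
    Set.range (A *ᵥ ·) ⊆ {x | H *ᵥ x = 0} ↔ H * A = 0 := by
  simp only [Set.range_subset_iff, Set.mem_ofPred_eq, mulVec_mulVec, ext_iff_mulVec, zero_mulVec]

section HermitianDual

variable {K m n : Type*} [Field K] [Fintype m] [Fintype n]

theorem Matrix.exists_vecMul_eq_of_forall_mulVec_eq_zero {H : Matrix m n K} {w : n → K}
    (hw : ∀ u, H *ᵥ u = 0 → w ⬝ᵥ u = 0) : ∃ c, c ᵥ* H = w := by
  classical
  have hw' : dotProductEquiv K n w ∈ (LinearMap.ker H.mulVecLin).dualAnnihilator :=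
    (Submodule.mem_dualAnnihilator _).2 hw
  obtain ⟨ψ, hψ⟩ := (LinearMap.range_dualMap_eq_dualAnnihilator_ker H.mulVecLin).ge hw'
  refine ⟨(dotProductEquiv K m).symm ψ, dotProduct_eq _ _ fun u => ?_⟩
  rw [← dotProduct_mulVec]
  exact (LinearMap.congr_fun ((dotProductEquiv K m).apply_symm_apply ψ) _).trans
    (LinearMap.congr_fun hψ u)

def hermitianDual (σ : K →+* K) (D : Set (n → K)) : Set (n → K) :=
  {v | ∀ u ∈ D, ∑ i, u i * σ (v i) = 0}

theorem hermitianDual_ker_eq_range (σ : K →+* K) (hσ : Function.Involutive σ)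
    (H : Matrix m n K) :
    hermitianDual σ {u | H *ᵥ u = 0} = Set.range ((H.map σ)ᵀ *ᵥ ·) := by
  have inner_eq_dotProduct : ∀ u v : n → K, ∑ i, u i * σ (v i) = (σ ∘ v) ⬝ᵥ u :=
    fun u v => dotProduct_comm u (σ ∘ v)
  ext v
  simp only [hermitianDual, Set.mem_ofPred_eq, Set.mem_range, inner_eq_dotProduct,
    mulVec_transpose]
  constructor
  · intro hv
    obtain ⟨c, hc⟩ := exists_vecMul_eq_of_forall_mulVec_eq_zero hv
    refine ⟨σ ∘ c, funext fun i => ?_⟩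
    rw [← RingHom.map_vecMul, hc]
    exact hσ (v i)
  · rintro ⟨c, rfl⟩ u hu
    have conj_vecMul : σ ∘ (c ᵥ* H.map σ) = (σ ∘ c) ᵥ* H := by
      ext i
      simp [RingHom.map_vecMul, Function.comp_def, hσ _]
    rw [conj_vecMul, ← dotProduct_mulVec, hu, dotProduct_zero]

theorem hermitianDual_ker_subset_ker_iff (σ : K →+* K) (hσ : Function.Involutive σ)
    (H : Matrix m n K) :
    hermitianDual σ {u | H *ᵥ u = 0} ⊆ {u | H *ᵥ u = 0} ↔ H * (H.map σ)ᵀ = 0 := by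
  rw [hermitianDual_ker_eq_range σ hσ, range_mulVec_subset_ker_iff]

end HermitianDual

theorem GaloisField.frobenius_two_two_involutive :
    Function.Involutive (frobenius (GaloisField 2 2) 2) := fun x => by
  let := Fintype.ofFinite (GaloisField 2 2)
  have hcard : Fintype.card (GaloisField 2 2) = 2 ^ 2 := by
    rw [Fintype.card_eq_nat_card, GaloisField.card 2 2 two_ne_zero]
  simpa [frobenius_def, ← pow_mul, hcard] using FiniteField.pow_card x

/-- The Hermitian dual-containing criterion over `GF(4)`: `D^{⊥h} ⊆ D` holds if and only if
`H * H† = 0`, where `D` is the kernel of `H`, the Hermitian inner product is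
`(u,v)_h = ∑ i, u i * (v i)²`, and `H† = (H.map (·²))ᵀ`. -/
theorem stmt12 {ρ n : ℕ} (H : Matrix (Fin ρ) (Fin n) (GaloisField 2 2))
    (conj : GaloisField 2 2 → GaloisField 2 2) (hconj : ∀ x, conj x = x ^ 2) :
    {v : Fin n → GaloisField 2 2 |
        ∀ u ∈ {u : Fin n → GaloisField 2 2 | H.mulVec u = 0}, ∑ i, u i * (v i) ^ 2 = 0} ⊆
        {x : Fin n → GaloisField 2 2 | H.mulVec x = 0} ↔
      H * (H.map conj)ᵀ = 0 := by
  obtain rfl : conj = frobenius (GaloisField 2 2) 2 := funext hconj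
  exact hermitianDual_ker_subset_ker_iff _ GaloisField.frobenius_two_two_involutive H
end

section
/- Let K be a field and let H₁ : Matrix (Fin ρ₁) (Fin n₁) K and H₂ : Matrix (Fin ρ₂) (Fin n₂) K be parity check matrices of two linear codes over the SAME field, and let H := H₁ ⊗ₖ H₂ be their Kronecker (tensor) product, a (ρ₁ρ₂) × (n₁n₂) matrix over K. Then H * Hᵀ = 0 if and only if H₁ * H₁ᵀ = 0 or H₂ * H₂ᵀ = 0. (Equivalently: the tensor product code with parity check matrix H₁ ⊗ₖ H₂ is Euclidean dual-containing if and only if C₁ is Euclidean dual-containing or C₂ is Euclidean dual-containing.) -/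
open Matrix

open Kronecker

theorem Matrix.kronecker_eq_zero_iff {α l m n p : Type*} [MulZeroClass α] [NoZeroDivisors α]
    {A : Matrix l m α} {B : Matrix n p α} : A ⊗ₖ B = 0 ↔ A = 0 ∨ B = 0 := by
  refine ⟨fun h => ?_, by rintro (rfl | rfl) <;> simp⟩
  by_contra! hAB
  obtain ⟨⟨i, j, hA⟩, ⟨i', j', hB⟩⟩ : (∃ i j, A i j ≠ 0) ∧ ∃ i' j', B i' j' ≠ 0 := by
    simpa only [Ne, ← Matrix.ext_iff, not_forall, zero_apply] using hAB
  exact mul_ne_zero hA hB (congr_fun₂ h (i, i') (j, j'))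

/-- Lemma 6 of the paper (same-field tensor product codes, Grassl–Rötteler): the Kronecker
product parity check matrix `H₁ ⊗ₖ H₂` satisfies `H * Hᵀ = 0` if and only if
`H₁ * H₁ᵀ = 0` or `H₂ * H₂ᵀ = 0`. -/
theorem stmt13 {K : Type*} [Field K] {ρ₁ n₁ ρ₂ n₂ : ℕ}
    (H₁ : Matrix (Fin ρ₁) (Fin n₁) K) (H₂ : Matrix (Fin ρ₂) (Fin n₂) K) :
    (H₁ ⊗ₖ H₂) * (H₁ ⊗ₖ H₂)ᵀ = 0 ↔ H₁ * H₁ᵀ = 0 ∨ H₂ * H₂ᵀ = 0 := by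
  rw [← kroneckerMap_transpose, ← mul_kronecker_mul, kronecker_eq_zero_iff]
end
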